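/- arXiv:2602.22164 — 3 statements merged into one kernel-verified Lean document; each statement's English description precedes it below -/
import Mathlib

section
/- The first isodynamic center function, represented by φ₁₅(a,b,c) = a(√3(−a²+b²+c²) + 4·Area), is the cyclic-affine combination φ₁₅ = √3·φ₃ + 4·Area·φ₆ of the circumcenter function φ₃(a,b,c) = a(−a²+b²+c²) and the symmedian function φ₆(a,b,c) = a; consequently the corresponding triangle center X₁₅ equals (4√3·Area/(4√3·Area + a²+b²+c²))·X₃ + ((a²+b²+c²)/(4√3·Area + a²+b²+c²))·X₆, so X₃, X₆, X₁₅ are collinear. -/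
/-- `(a,b,c)` are the side lengths of a nondegenerate triangle. -/
def IsTriangle (a b c : ℝ) : Prop :=
  0 < a ∧ 0 < b ∧ 0 < c ∧ a < b + c ∧ b < c + a ∧ c < a + b

/-- The trace of a triangle center function. -/
def trace (ψ : ℝ → ℝ → ℝ → ℝ) (a b c : ℝ) : ℝ :=
  a * ψ a b c + b * ψ b c a + c * ψ c a b

/-- The triangle center associated to a triangle center function `ψ`. -/
noncomputable def centerPoint (ψ : ℝ → ℝ → ℝ → ℝ)
    (A B C : EuclideanSpace ℝ (Fin 2)) (a b c : ℝ) : EuclideanSpace ℝ (Fin 2) :=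
  (trace ψ a b c)⁻¹ • ((a * ψ a b c) • A + (b * ψ b c a) • B + (c * ψ c a b) • C)

/-- Heron's formula for the area of a triangle with side lengths `a`, `b`, `c`. -/
noncomputable def heronArea (a b c : ℝ) : ℝ :=
  (1 / 4) * Real.sqrt ((a + b + c) * (-a + b + c) * (a - b + c) * (a + b - c))

/-- Circumcenter function. -/
def φ₃ (a b c : ℝ) : ℝ := a * (-a ^ 2 + b ^ 2 + c ^ 2)

/-- Symmedian point function. -/
def φ₆ (a b c : ℝ) : ℝ := a

/-- First isodynamic center function. -/
noncomputable def φ₁₅ (a b c : ℝ) : ℝ :=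
  a * (Real.sqrt 3 * (-a ^ 2 + b ^ 2 + c ^ 2) + 4 * heronArea a b c)


/-! Since the area is a symmetric function of the sides, `φ₁₅ = √3·φ₃ + 4·Area·φ₆` is a combination
of `φ₃` and `φ₆` with coefficients that are constant along the cyclic rotations of `(a, b, c)`.
Traces and barycentric weights are linear under such combinations, so `X₁₅` is the weighted
average of `X₃` and `X₆` with weights `√3·trace φ₃` and `4·Area·trace φ₆`, i.e. `16√3·Area²` and
`4·Area·(a² + b² + c²)`; in particular it lies on the line `X₃X₆`. -/

theorem heronArea_rotate (a b c : ℝ) : heronArea b c a = heronArea a b c := by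
  unfold heronArea
  ring_nf

theorem IsTriangle.heron_product_pos {a b c : ℝ} (h : IsTriangle a b c) :
    0 < (a + b + c) * (-a + b + c) * (a - b + c) * (a + b - c) := by
  obtain ⟨ha, hb, hc, hab, hbc, hca⟩ := h
  have : 0 < a + b + c := by linarith
  exact mul_pos (mul_pos (mul_pos this (by linarith)) (by linarith)) (by linarith)

theorem IsTriangle.heronArea_pos {a b c : ℝ} (h : IsTriangle a b c) : 0 < heronArea a b c := by
  unfold heronArea
  have := Real.sqrt_pos.mpr h.heron_product_pos
  positivity

theorem IsTriangle.sixteen_mul_heronArea_sq {a b c : ℝ} (h : IsTriangle a b c) :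
    16 * heronArea a b c ^ 2 = (a + b + c) * (-a + b + c) * (a - b + c) * (a + b - c) := by
  rw [heronArea, mul_pow, Real.sq_sqrt h.heron_product_pos.le]
  ring

theorem IsTriangle.trace_φ₃ {a b c : ℝ} (h : IsTriangle a b c) :
    trace φ₃ a b c = 16 * heronArea a b c ^ 2 := by
  rw [h.sixteen_mul_heronArea_sq, trace, φ₃, φ₃, φ₃]
  ring

theorem trace_φ₆ (a b c : ℝ) : trace φ₆ a b c = a ^ 2 + b ^ 2 + c ^ 2 := by
  rw [trace, φ₆, φ₆, φ₆]
  ring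

theorem φ₁₅_eq (x y z : ℝ) :
    φ₁₅ x y z = Real.sqrt 3 * φ₃ x y z + (4 * heronArea x y z) * φ₆ x y z := by
  rw [φ₁₅, φ₃, φ₆]
  ring

section Combination

variable {ψ φ χ β : ℝ → ℝ → ℝ → ℝ} {α : ℝ}
  (hψ : ∀ x y z, ψ x y z = α * φ x y z + β x y z * χ x y z) (hβ : ∀ x y z, β y z x = β x y z)
include hψ hβ

theorem trace_eq_of_combination (a b c : ℝ) :
    trace ψ a b c = α * trace φ a b c + β a b c * trace χ a b c := by
  simp only [trace, hψ, hβ a b c, hβ c a b]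
  ring

theorem centerPoint_eq_of_combination (A B C : EuclideanSpace ℝ (Fin 2)) {a b c : ℝ}
    (hφ : trace φ a b c ≠ 0) (hχ : trace χ a b c ≠ 0) :
    centerPoint ψ A B C a b c
      = (α * trace φ a b c / trace ψ a b c) • centerPoint φ A B C a b c
        + (β a b c * trace χ a b c / trace ψ a b c) • centerPoint χ A B C a b c := by
  simp only [centerPoint, trace_eq_of_combination hψ hβ, hψ, hβ a b c, hβ c a b]
  match_scalars <;> field_simp

end Combination

theorem collinear_of_eq_smul_add_smul {V : Type*} [AddCommGroup V] [Module ℝ V] {p q r : V}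
    {s t : ℝ} (hst : s + t = 1) (hr : r = s • p + t • q) : Collinear ℝ ({p, q, r} : Set V) := by
  have hline : r ∈ line[ℝ, p, q] := by
    obtain rfl : s = 1 - t := by linarith
    rw [hr, ← AffineMap.lineMap_apply_module]
    exact AffineMap.lineMap_mem_affineSpan_pair t p q
  rw [Set.pair_comm, Set.insert_comm]
  exact collinear_insert_of_mem_affineSpan_pair hline

theorem X15_on_brocard_axis_general (A B C : EuclideanSpace ℝ (Fin 2)) (a b c : ℝ)
    (h : IsTriangle a b c) :
    (∀ x y z : ℝ,
      φ₁₅ x y z = Real.sqrt 3 * φ₃ x y z + (4 * heronArea x y z) * φ₆ x y z) ∧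
    centerPoint φ₁₅ A B C a b c
      = (4 * Real.sqrt 3 * heronArea a b c /
          (4 * Real.sqrt 3 * heronArea a b c + (a ^ 2 + b ^ 2 + c ^ 2))) •
          centerPoint φ₃ A B C a b c
        + ((a ^ 2 + b ^ 2 + c ^ 2) /
          (4 * Real.sqrt 3 * heronArea a b c + (a ^ 2 + b ^ 2 + c ^ 2))) •
          centerPoint φ₆ A B C a b c ∧
    Collinear ℝ
      ({centerPoint φ₃ A B C a b c, centerPoint φ₆ A B C a b c,
        centerPoint φ₁₅ A B C a b c} : Set (EuclideanSpace ℝ (Fin 2))) := by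
  have hS := h.heronArea_pos
  have hT : 0 < a ^ 2 + b ^ 2 + c ^ 2 := by obtain ⟨ha, -⟩ := h; positivity
  have hrot : ∀ x y z, 4 * heronArea y z x = 4 * heronArea x y z := fun x y z ↦ by
    rw [heronArea_rotate]
  have hcomb := centerPoint_eq_of_combination φ₁₅_eq hrot A B C
    (by rw [h.trace_φ₃]; positivity) (by rw [trace_φ₆]; positivity)
  rw [trace_eq_of_combination φ₁₅_eq hrot, h.trace_φ₃, trace_φ₆] at hcomb
  set S := heronArea a b c
  set T := a ^ 2 + b ^ 2 + c ^ 2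
  have hX₁₅ : centerPoint φ₁₅ A B C a b c
      = (4 * Real.sqrt 3 * S / (4 * Real.sqrt 3 * S + T)) • centerPoint φ₃ A B C a b c
        + (T / (4 * Real.sqrt 3 * S + T)) • centerPoint φ₆ A B C a b c := by
    rw [hcomb]
    congr 2 <;> field_simp <;> ring
  refine ⟨φ₁₅_eq, hX₁₅, collinear_of_eq_smul_add_smul ?_ hX₁₅⟩
  field_simp

theorem X15_on_brocard_axis (A B C : EuclideanSpace ℝ (Fin 2)) (a b c : ℝ)
    (ha : a = dist B C) (hb : b = dist C A) (hc : c = dist A B)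
    (h : IsTriangle a b c) :
    (∀ x y z : ℝ,
      φ₁₅ x y z = Real.sqrt 3 * φ₃ x y z + (4 * heronArea x y z) * φ₆ x y z) ∧
    centerPoint φ₁₅ A B C a b c
      = (4 * Real.sqrt 3 * heronArea a b c /
          (4 * Real.sqrt 3 * heronArea a b c + (a ^ 2 + b ^ 2 + c ^ 2))) •
          centerPoint φ₃ A B C a b c
        + ((a ^ 2 + b ^ 2 + c ^ 2) /
          (4 * Real.sqrt 3 * heronArea a b c + (a ^ 2 + b ^ 2 + c ^ 2))) •
          centerPoint φ₆ A B C a b c ∧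
    Collinear ℝ
      ({centerPoint φ₃ A B C a b c, centerPoint φ₆ A B C a b c,
        centerPoint φ₁₅ A B C a b c} : Set (EuclideanSpace ℝ (Fin 2))) :=
  X15_on_brocard_axis_general A B C a b c h
end

section
/- For the aliquot family Φ_A(t) = (0, 1−t, t) with t ≠ 1/2, the inverse under cyclic convolution is proportional to Φ_N(−t/(1−2t)), where Φ_N(s) = ((1−s)s, s², (1−s)²) is the nedian family. That is, ((1−t)t, t², (1−t)²) cyclically convolved with (0, 1−t, t), after substituting t ↦ −t/(1−2t) in the first factor, is proportional to (1,0,0). -/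
/-- Cyclic convolution of two triples of reals. -/
def cconv (x y : ℝ × ℝ × ℝ) : ℝ × ℝ × ℝ :=
  (x.1 * y.1 + x.2.1 * y.2.2 + x.2.2 * y.2.1,
   x.1 * y.2.1 + x.2.1 * y.1 + x.2.2 * y.2.2,
   x.1 * y.2.2 + x.2.1 * y.2.1 + x.2.2 * y.1)

/-- The aliquot family. -/
def ΦA (t : ℝ) : ℝ × ℝ × ℝ := (0, 1 - t, t)

/-- The nedian family. -/
def ΦN (s : ℝ) : ℝ × ℝ × ℝ := ((1 - s) * s, s ^ 2, (1 - s) ^ 2)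

/-! The second and third entries of `cconv (ΦN s) (ΦA t)` share the factor `s + t - 2st`, which
vanishes exactly at `s = -t / (1 - 2t)`. There `s (1 - 2t) = -t` and `(1 - s)(1 - 2t) = 1 - t`, so
the first entry becomes `(t³ + (1 - t)³) / (1 - 2t)²`, and `t³ + (1 - t)³ = 3(t - 1/2)² + 1/4 > 0`. -/

theorem cconv_ΦN_ΦA (s t : ℝ) :
    cconv (ΦN s) (ΦA t) =
      (s ^ 2 * t + (1 - s) ^ 2 * (1 - t), (1 - s) * (s + t - 2 * s * t),
        s * (s + t - 2 * s * t)) := by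
  simp only [cconv, ΦN, ΦA, Prod.mk.injEq]
  refine ⟨?_, ?_, ?_⟩ <;> ring

theorem cconv_ΦN_ΦA_of_mul_eq {s t : ℝ} (hs : s * (1 - 2 * t) = -t) :
    cconv (ΦN s) (ΦA t) = (s ^ 2 * t + (1 - s) ^ 2 * (1 - t), 0, 0) := by
  have hfactor : s + t - 2 * s * t = 0 := by linear_combination hs
  rw [cconv_ΦN_ΦA, hfactor, mul_zero, mul_zero]

theorem cube_add_one_sub_cube_pos (t : ℝ) : 0 < t ^ 3 + (1 - t) ^ 3 := by
  nlinarith [sq_nonneg (2 * t - 1)]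

theorem sq_mul_add_one_sub_sq_mul_ne_zero {s t : ℝ} (hs : s * (1 - 2 * t) = -t) :
    s ^ 2 * t + (1 - s) ^ 2 * (1 - t) ≠ 0 := by
  have hscaled : (s ^ 2 * t + (1 - s) ^ 2 * (1 - t)) * (1 - 2 * t) ^ 2 = t ^ 3 + (1 - t) ^ 3 := by
    linear_combination (s * (1 - 2 * t) * t - t ^ 2 - (1 - t) * (1 - s) * (1 - 2 * t)
      - (1 - t) ^ 2) * hs
  intro h
  rw [h, zero_mul] at hscaled
  exact (cube_add_one_sub_cube_pos t).ne hscaled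

theorem aliquot_inverse_nedian (t : ℝ) (ht : t ≠ 1 / 2) :
    ∃ lam : ℝ, lam ≠ 0 ∧
      cconv (ΦN (-t / (1 - 2 * t))) (ΦA t) = (lam, 0, 0) := by
  have hden : 1 - 2 * t ≠ 0 := fun h => ht (by linarith)
  have hs : -t / (1 - 2 * t) * (1 - 2 * t) = -t := div_mul_cancel₀ _ hden
  exact ⟨_, sq_mul_add_one_sub_sq_mul_ne_zero hs, cconv_ΦN_ΦA_of_mul_eq hs⟩
end

section
/- The curve L(t) = (3k/(2(1−(1−t)t)²)) · ( t(1+t−2(2−t)t²), √3·(1−t)t(1−2t) ) satisfies the Limaçon trisectrix equation k²(x²+y²) = (x²+y²−2kx)² for all t ∈ ℝ, where (x,y) = L(t). -/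
lemma one_sub_mul_one_sub_pos (t : ℝ) : 0 < 1 - t * (1 - t) := by
  nlinarith [sq_nonneg (2 * t - 1)]

theorem limacon_trisectrix_general (k t x y : ℝ)
    (hx : x = 3 * k / (2 * (1 - (1 - t) * t) ^ 2) *
      (t * (1 + t - 2 * (2 - t) * t ^ 2)))
    (hy : y = 3 * k / (2 * (1 - (1 - t) * t) ^ 2) *
      (Real.sqrt 3 * ((1 - t) * t * (1 - 2 * t)))) :
    k ^ 2 * (x ^ 2 + y ^ 2) = (x ^ 2 + y ^ 2 - 2 * k * x) ^ 2 := by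
  -- `field_simp` normalizes the denominator `1 - (1 - t) * t` to this form.
  have hD : 1 - t * (1 - t) ≠ 0 := (one_sub_mul_one_sub_pos t).ne'
  have hy2 : y ^ 2 = (3 * k / (2 * (1 - (1 - t) * t) ^ 2)) ^ 2 *
      (3 * ((1 - t) * t * (1 - 2 * t)) ^ 2) := by
    rw [hy, mul_pow, mul_pow, Real.sq_sqrt zero_le_three]
  rw [hy2, hx]
  field_simp
  ring

theorem limacon_trisectrix (k t x y : ℝ) (hk : k ≠ 0)
    (hx : x = 3 * k / (2 * (1 - (1 - t) * t) ^ 2) *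
      (t * (1 + t - 2 * (2 - t) * t ^ 2)))
    (hy : y = 3 * k / (2 * (1 - (1 - t) * t) ^ 2) *
      (Real.sqrt 3 * ((1 - t) * t * (1 - 2 * t)))) :
    k ^ 2 * (x ^ 2 + y ^ 2) = (x ^ 2 + y ^ 2 - 2 * k * x) ^ 2 :=
  limacon_trisectrix_general k t x y hx hy
end
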